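/- Let φ : ℕ → ℝ be a monotonically increasing function with φ(n) ≥ n for all n ≥ 1 and such that φ(n+1) − φ(n) → ∞ as n → ∞. Let q > 1 and λ > 0 be real numbers, and set X_φ = { q^{φ(n)} : n ∈ ℕ, n ≥ 1 } ⊆ ℝ with the metric induced from the real line. Then there exists a correspondence R between X_φ and X_φ with sup { |d(x,x') − λ·d(y,y')| : (x,y), (x',y') ∈ R } < ∞ (i.e., λ·X_φ lies at finite Gromov–Hausdorff distance from X_φ) if and only if λ = 1. In particular, for every λ ≠ 1, every correspondence R between X_φ and X_φ satisfies sup { |d(x,x') − λ·d(y,y')| : (x,y), (x',y') ∈ R } = ∞. -/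

import Mathlib

open ENNReal

/-- A correspondence between `X` and `Y`: a relation whose projections to both
factors are surjective. -/
def IsCorrespondence {X Y : Type*} (R : Set (X × Y)) : Prop :=
  (∀ x : X, ∃ y : Y, (x, y) ∈ R) ∧ (∀ y : Y, ∃ x : X, (x, y) ∈ R)

/-- The distortion of a relation `R ⊆ X × Y`:
`sup { |d_X(x,x') − d_Y(y,y')| : (x,y) ∈ R, (x',y') ∈ R }`, valued in `[0,∞]`. -/
noncomputable def dis {X Y : Type*} [MetricSpace X] [MetricSpace Y]
    (R : Set (X × Y)) : ℝ≥0∞ :=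
  ⨆ p ∈ R, ⨆ q ∈ R, ENNReal.ofReal |dist p.1 q.1 - dist p.2 q.2|

/-- The `l`-scaled distortion of a relation `R ⊆ X × Y`:
`sup { |d_X(x,x') − l·d_Y(y,y')| : (x,y) ∈ R, (x',y') ∈ R }`, valued in `[0,∞]`.
Its finiteness is equivalent to finiteness of the Gromov–Hausdorff distance
between `X` and the rescaled space `l·Y`. -/
noncomputable def disScaled {X Y : Type*} [MetricSpace X] [MetricSpace Y]
    (l : ℝ) (R : Set (X × Y)) : ℝ≥0∞ :=
  ⨆ p ∈ R, ⨆ q ∈ R, ENNReal.ofReal |dist p.1 q.1 - l * dist p.2 q.2|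

/-!
If `R` has finite `λ`-distortion, comparing each pair of `R` with one fixed pair `(x₀, y₀)` shows
that `|x - λ y|` is bounded on `R`, so every point of `X_φ` lies within bounded distance of `λ X_φ`.
But the ratios `q^{φ(n+1)} / q^{φ(n)} = q^{φ(n+1) - φ(n)}` tend to infinity, so for large `n` the
point `q^{φ(n+1)}` is far from every `λ q^{φ(m)}`: for `m ≤ n` these are at most half of it, for
`m = n + 1` the difference is `|1 - λ| q^{φ(n+1)}`, and for `m ≥ n + 2` they exceed twice it.
For `λ = 1` the diagonal has distortion zero.
-/

open Filter

lemma abs_dist_sub_mul_dist_le_toReal_disScaled {X Y : Type*} [MetricSpace X] [MetricSpace Y]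
    {l : ℝ} {R : Set (X × Y)}
    (hR : disScaled l R ≠ ⊤) {p r : X × Y} (hp : p ∈ R) (hr : r ∈ R) :
    |dist p.1 r.1 - l * dist p.2 r.2| ≤ (disScaled l R).toReal :=
  (ENNReal.ofReal_le_iff_le_toReal hR).1 (le_iSup₂_of_le p hp (le_iSup₂_of_le r hr le_rfl))

lemma isCorrespondence_diagonal {X : Type*} : IsCorrespondence {p : X × X | p.1 = p.2} :=
  ⟨fun x => ⟨x, rfl⟩, fun y => ⟨y, rfl⟩⟩

lemma disScaled_one_diagonal {X : Type*} [MetricSpace X] :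
    disScaled 1 {p : X × X | p.1 = p.2} = 0 := by
  simp only [disScaled, ENNReal.iSup_eq_zero]
  rintro p (hp : p.1 = p.2) r (hr : r.1 = r.2)
  simp [hp, hr]

lemma exists_abs_norm_sub_mul_norm_le {E F : Type*} [NormedAddCommGroup E] [NormedAddCommGroup F]
    {X : Set E} {Y : Set F} {l : ℝ} (hl : 0 ≤ l) {R : Set (X × Y)}
    (hR : ∀ x : X, ∃ y : Y, (x, y) ∈ R) (hfin : disScaled l R ≠ ⊤) :
    ∃ K, ∀ x : X, ∃ y : Y, |‖(x : E)‖ - l * ‖(y : F)‖| ≤ K := by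
  rcases isEmpty_or_nonempty X with hX | ⟨⟨x₀⟩⟩
  · exact ⟨0, fun x => isEmptyElim x⟩
  obtain ⟨y₀, h₀⟩ := hR x₀
  refine ⟨(disScaled l R).toReal + ‖(x₀ : E)‖ + l * ‖(y₀ : F)‖, fun x => ?_⟩
  obtain ⟨y, h⟩ := hR x
  refine ⟨y, ?_⟩
  have hdis := abs_dist_sub_mul_dist_le_toReal_disScaled hfin h h₀
  simp only [Subtype.dist_eq, dist_eq_norm] at hdis
  have hx : |‖(x : E)‖ - ‖(x - x₀ : E)‖| ≤ ‖(x₀ : E)‖ := by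
    simpa using abs_norm_sub_norm_le (x : E) (x - x₀ : E)
  have hy : |‖(y : F)‖ - ‖(y - y₀ : F)‖| ≤ ‖(y₀ : F)‖ := by
    simpa using abs_norm_sub_norm_le (y : F) (y - y₀ : F)
  rw [abs_le] at hdis hx hy ⊢
  constructor <;> nlinarith

section RatioTendstoAtTop

variable {a : ℕ → ℝ} (hpos : ∀ n, 0 < a n)
  (hratio : Tendsto (fun n => a (n + 1) / a n) atTop atTop)
include hpos hratio

lemma eventually_mul_le_succ_of_tendsto_ratio (c : ℝ) : ∀ᶠ n in atTop, c * a n ≤ a (n + 1) :=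
  (hratio.eventually_ge_atTop c).mono fun n hn => (le_div_iff₀ (hpos n)).1 hn

variable (hmono : Monotone a)
include hmono

lemma tendsto_atTop_of_tendsto_ratio : Tendsto a atTop atTop := by
  rw [← tendsto_add_atTop_iff_nat 1]
  refine tendsto_atTop_mono (fun n => ?_) (hratio.atTop_mul_const (hpos 0))
  calc a (n + 1) / a n * a 0
      ≤ a (n + 1) / a n * a n :=
        mul_le_mul_of_nonneg_left (hmono n.zero_le) (div_pos (hpos _) (hpos _)).le
    _ = a (n + 1) := div_mul_cancel₀ _ (hpos n).ne'

lemma eventually_forall_lt_abs_sub_mul {μ : ℝ} (hμ : 0 < μ) (hμ₁ : μ ≠ 1) (K : ℝ) :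
    ∀ᶠ n in atTop, ∀ m, K < |a (n + 1) - μ * a m| := by
  have hμ₁' : 0 < |1 - μ| := abs_pos.2 (sub_ne_zero.2 hμ₁.symm)
  filter_upwards [eventually_mul_le_succ_of_tendsto_ratio hpos hratio (2 * μ),
    (tendsto_add_atTop_nat 1).eventually
      (eventually_mul_le_succ_of_tendsto_ratio hpos hratio (2 / μ)),
    (tendsto_add_atTop_nat 1).eventually
      ((tendsto_atTop_of_tendsto_ratio hpos hratio hmono).eventually_gt_atTop
        (max (2 * K) (K / |1 - μ|)))] with n hbelow habove hlarge m
  rw [max_lt_iff, div_lt_iff₀ hμ₁'] at hlarge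
  have hn := hpos (n + 1)
  rcases lt_trichotomy m (n + 1) with hm | rfl | hm
  · have : μ * a m ≤ μ * a n := mul_le_mul_of_nonneg_left (hmono (Nat.lt_succ_iff.1 hm)) hμ.le
    rw [lt_abs]; left; linarith
  · rw [← one_sub_mul, abs_mul, abs_of_pos hn, mul_comm]
    exact hlarge.2
  · have : 2 * a (n + 1) ≤ μ * a m := by
      calc 2 * a (n + 1) = μ * (2 / μ * a (n + 1)) := by field_simp
        _ ≤ μ * a m := mul_le_mul_of_nonneg_left (habove.trans (hmono hm)) hμ.le
    rw [lt_abs]; right; linarith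

end RatioTendstoAtTop

theorem stabilizer_trivial_of_gaps_tendsto_top_general (φ : ℕ → ℝ) (hmono : StrictMono φ)
    (hgap : Filter.Tendsto (fun n => φ (n + 1) - φ n) Filter.atTop Filter.atTop)
    (q lam : ℝ) (hq : 1 < q) (hlam : 0 < lam)
    (Xs : Set ℝ) (hXs : Xs = {x : ℝ | ∃ n : ℕ, 1 ≤ n ∧ x = q ^ φ n}) :
    ((∃ R : Set (Xs × Xs), IsCorrespondence R ∧ disScaled lam R < ⊤) ↔ lam = 1) ∧
      (lam ≠ 1 → ∀ R : Set (Xs × Xs), IsCorrespondence R → disScaled lam R = ⊤) := by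
  set a : ℕ → ℝ := fun n => q ^ φ n with ha
  have hpos : ∀ n, 0 < a n := fun n => Real.rpow_pos_of_pos (by linarith) _
  have hmono_a : Monotone a :=
    (Real.strictMono_rpow_of_base_gt_one hq).monotone.comp hmono.monotone
  have hratio : Tendsto (fun n => a (n + 1) / a n) atTop atTop := by
    simpa only [ha, Function.comp_def, ← Real.rpow_sub (by linarith : 0 < q)] using
      (tendsto_rpow_atTop_of_base_gt_one q hq).comp hgap
  have hinfinite : lam ≠ 1 → ∀ R : Set (Xs × Xs), IsCorrespondence R → disScaled lam R = ⊤ := by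
    intro hne R hR
    by_contra hfin
    obtain ⟨K, hK⟩ := exists_abs_norm_sub_mul_norm_le hlam.le hR.1 hfin
    obtain ⟨n, hn⟩ := (eventually_forall_lt_abs_sub_mul hpos hratio hmono_a hlam hne K).exists
    obtain ⟨⟨y, hy⟩, hK⟩ := hK ⟨a (n + 1), hXs ▸ ⟨n + 1, n.succ_pos, rfl⟩⟩
    obtain ⟨m, -, rfl⟩ := hXs ▸ hy
    rw [Real.norm_of_nonneg (hpos _).le, Real.norm_of_nonneg (hpos _).le] at hK
    exact (hn m).not_ge hK
  refine ⟨⟨fun ⟨R, hR, hfin⟩ => ?_, ?_⟩, hinfinite⟩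
  · by_contra hne
    exact hfin.ne (hinfinite hne R hR)
  · rintro rfl
    exact ⟨_, isCorrespondence_diagonal, by simp [disScaled_one_diagonal]⟩

/-- Theorem 5.8: let `φ : ℕ → ℝ` be increasing with `φ(n) ≥ n` for `n ≥ 1` and
`φ(n+1) − φ(n) → ∞`, and let `q > 1`, `λ > 0` be reals. For
`X_φ = {q^{φ(n)} : n ≥ 1} ⊆ ℝ`, some correspondence `R` between `X_φ` and `X_φ`
has `sup { |d(x,x') − λ·d(y,y')| } < ∞` iff `λ = 1`; in particular, for `λ ≠ 1`
every correspondence has infinite such supremum. -/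
theorem stabilizer_trivial_of_gaps_tendsto_top (φ : ℕ → ℝ) (hmono : StrictMono φ)
    (hge : ∀ n : ℕ, 1 ≤ n → (n : ℝ) ≤ φ n)
    (hgap : Filter.Tendsto (fun n => φ (n + 1) - φ n) Filter.atTop Filter.atTop)
    (q lam : ℝ) (hq : 1 < q) (hlam : 0 < lam)
    (Xs : Set ℝ) (hXs : Xs = {x : ℝ | ∃ n : ℕ, 1 ≤ n ∧ x = q ^ φ n}) :
    ((∃ R : Set (Xs × Xs), IsCorrespondence R ∧ disScaled lam R < ⊤) ↔ lam = 1) ∧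
      (lam ≠ 1 → ∀ R : Set (Xs × Xs), IsCorrespondence R → disScaled lam R = ⊤) :=
  stabilizer_trivial_of_gaps_tendsto_top_general φ hmono hgap q lam hq hlam Xs hXs
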